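/- Let G be a finite connected simple graph with at least one edge and let H be a finite simple graph with at least one edge. Then Δ(G +_Q H) = max{Δ(Q(G)), Δ(G) + Δ(H)}, and moreover Δ(G +_Q H) < mbt(Q(G)) + Δ(H). -/

import Mathlib

open SimpleGraph

/-- Degree of a vertex. -/
noncomputable def deg {V : Type*} (G : SimpleGraph V) (v : V) : ℕ :=
  (G.neighborSet v).ncard

/-- Maximum degree Δ(G) of a finite simple graph. -/
noncomputable def maxDeg {V : Type*} [Fintype V] (G : SimpleGraph V) : ℕ :=
  Finset.univ.sup (deg G)

/-- `IsMBE G k f page` : the linear order on vertices given by the injection `f : V → ℕ`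
together with the page assignment `page` is a matching book embedding of `G` on `k` pages:
every edge gets a page `< k`, no two edges on a common page cross, and every vertex is
incident to at most one edge on each page. -/
def IsMBE {V : Type*} (G : SimpleGraph V) (k : ℕ) (f : V → ℕ) (page : Sym2 V → ℕ) : Prop :=
  Function.Injective f ∧
  (∀ u v, G.Adj u v → page s(u, v) < k) ∧
  (∀ u v x y, G.Adj u v → G.Adj x y → page s(u, v) = page s(x, y) →
    ¬(f u < f x ∧ f x < f v ∧ f v < f y)) ∧
  (∀ u v w, G.Adj u v → G.Adj u w → v ≠ w → page s(u, v) ≠ page s(u, w))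

/-- The matching book thickness of `G`: the least number of pages admitting a
matching book embedding. -/
noncomputable def mbt {V : Type*} (G : SimpleGraph V) : ℕ :=
  sInf {k | ∃ f page, IsMBE G k f page}

/-- A graph is outerplanar iff it has a one-page book embedding: a linear order of
its vertices (an injection into `ℕ`) in which no two edges cross. -/
def IsOuterplanar {V : Type*} (G : SimpleGraph V) : Prop :=
  ∃ f : V → ℕ, Function.Injective f ∧
    ∀ u v x y, G.Adj u v → G.Adj x y → ¬(f u < f x ∧ f x < f v ∧ f v < f y)

/-- The derived graph of `G` on vertex set `V(G) ⊕ E(G)`. Black–white edges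
(`u`–`(uv)` for `u` an endpoint of the edge `uv`) are always present; `black` indicates
whether the original edges of `G` are retained, and `white` indicates whether two edge
vertices corresponding to adjacent edges of `G` (distinct edges sharing an endpoint)
are joined. -/
def derivedG {V : Type*} (G : SimpleGraph V) (black white : Bool) :
    SimpleGraph (V ⊕ G.edgeSet) where
  Adj x y :=
    match x, y with
    | Sum.inl u, Sum.inl v => black = true ∧ G.Adj u v
    | Sum.inl u, Sum.inr e => u ∈ (e : Sym2 V)
    | Sum.inr e, Sum.inl u => u ∈ (e : Sym2 V)
    | Sum.inr e, Sum.inr f =>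
        white = true ∧ e ≠ f ∧ ∃ w, w ∈ (e : Sym2 V) ∧ w ∈ (f : Sym2 V)
  symm := by
    constructor; rintro (u | e) (v | f) h
    · exact ⟨h.1, h.2.symm⟩
    · exact h
    · exact h
    · obtain ⟨hw, hne, w, h1, h2⟩ := h
      exact ⟨hw, hne.symm, w, h2, h1⟩
  loopless := by
    constructor; rintro (u | e) h
    · exact G.irrefl h.2
    · exact h.2.1 rfl

/-- The four graph operations `S`, `R`, `Q`, `T`. -/
inductive FOp : Type
  | S | R | Q | T
  deriving DecidableEq

/-- Whether the operation retains the original (black–black) edges of `G`. -/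
def FOp.black : FOp → Bool
  | .R => true
  | .T => true
  | _ => false

/-- Whether the operation joins edge (white) vertices of adjacent edges. -/
def FOp.white : FOp → Bool
  | .Q => true
  | .T => true
  | _ => false

/-- `FGraph F G` is the graph `F(G)` for `F ∈ {S, R, Q, T}`. -/
def FGraph (F : FOp) {V : Type*} (G : SimpleGraph V) : SimpleGraph (V ⊕ G.edgeSet) :=
  derivedG G F.black F.white

/-- The `F`-sum `G +_F H`: vertex set `(V(G) ∪ E(G)) × V(H)`; `(u₁, u₂)` and `(v₁, v₂)`
are adjacent iff `u₁ = v₁ ∈ V(G)` and `u₂v₂ ∈ E(H)`, or `u₂ = v₂` and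
`u₁v₁ ∈ E(F(G))`. -/
def FSum (F : FOp) {V W : Type*} (G : SimpleGraph V) (H : SimpleGraph W) :
    SimpleGraph ((V ⊕ G.edgeSet) × W) where
  Adj x y :=
    (x.1 = y.1 ∧ (∃ u : V, x.1 = Sum.inl u) ∧ H.Adj x.2 y.2) ∨
    (x.2 = y.2 ∧ (FGraph F G).Adj x.1 y.1)
  symm := by
    constructor; rintro ⟨a, b⟩ ⟨c, d⟩ (⟨h1, h2, h3⟩ | ⟨h1, h2⟩)
    · exact Or.inl ⟨h1.symm, h1 ▸ h2, h3.symm⟩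
    · exact Or.inr ⟨h1.symm, h2.symm⟩
  loopless := by
    constructor; rintro ⟨a, b⟩ (⟨-, -, h⟩ | ⟨-, h⟩)
    · exact H.irrefl h
    · exact (FGraph F G).irrefl h

/-- The path graph `P_n` on `n` vertices. -/
def pathG (n : ℕ) : SimpleGraph (Fin n) where
  Adj i j := (i : ℕ) + 1 = (j : ℕ) ∨ (j : ℕ) + 1 = (i : ℕ)
  symm := by constructor; intro i j h; tauto
  loopless := by constructor; intro i h; omega

instance (n : ℕ) : DecidableRel (pathG n).Adj := fun i j =>
  inferInstanceAs (Decidable (_ ∨ _))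

/-- The cycle graph `C_n` on `n` vertices (intended for `n ≥ 3`). -/
def cycleG (n : ℕ) : SimpleGraph (Fin n) where
  Adj i j := i ≠ j ∧ (((i : ℕ) + 1) % n = (j : ℕ) ∨ ((j : ℕ) + 1) % n = (i : ℕ))
  symm := by constructor; intro i j h; tauto
  loopless := by constructor; intro i h; exact h.1 rfl

instance (n : ℕ) : DecidableRel (cycleG n).Adj := fun i j =>
  inferInstanceAs (Decidable (_ ∧ _))

/-- The star graph `S_n = K_{1,n}` on `n + 1` vertices: vertex `0` is the center. -/
def starG (n : ℕ) : SimpleGraph (Fin (n + 1)) where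
  Adj i j := i ≠ j ∧ (i = 0 ∨ j = 0)
  symm := by constructor; intro i j h; tauto
  loopless := by constructor; intro i h; exact h.1 rfl

instance (n : ℕ) : DecidableRel (starG n).Adj := fun i j =>
  inferInstanceAs (Decidable (_ ∧ _))

/-- The circulant graph `C(ℤ_m, {1, 2})`: vertices `0, …, m - 1`, with `i` adjacent to
`j` iff `i - j ≡ ±1` or `±2 (mod m)`. -/
def circulantG12 (m : ℕ) : SimpleGraph (Fin m) where
  Adj i j := i ≠ j ∧
    (((i : ℕ) + 1) % m = (j : ℕ) ∨ ((i : ℕ) + 2) % m = (j : ℕ) ∨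
     ((j : ℕ) + 1) % m = (i : ℕ) ∨ ((j : ℕ) + 2) % m = (i : ℕ))
  symm := by constructor; intro i j h; tauto
  loopless := by constructor; intro i h; exact h.1 rfl

/-!
A vertex `(u, w)` of `G +_Q H` with `u ∈ V(G)` has degree `deg_G u + deg_H w`, and a vertex
`(e, w)` with `e ∈ E(G)` has the degree of `e` in `Q(G)`; this gives the formula for the maximum
degree. For the bound, `Δ(Q(G)) ≤ mbt(Q(G))` because the edges at a vertex lie on distinct
pages, and `Δ(G) < Δ(Q(G))` because an edge `uv` at a vertex `u` of maximum degree is adjacent in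
`Q(G)` to `u`, to `v` and to the other `Δ(G) - 1` edges at `u`; finally `Δ(H) ≥ 1` gives
`Δ(Q(G)) < mbt(Q(G)) + Δ(H)`.
-/

section MaxDeg

variable {α : Type*} (X : SimpleGraph α)

theorem deg_pos_of_adj [Finite α] {u v : α} (h : X.Adj u v) : 0 < deg X u :=
  (Set.ncard_pos).mpr ⟨v, h⟩

variable [Fintype α]

theorem deg_le_maxDeg (v : α) : deg X v ≤ maxDeg X :=
  Finset.le_sup (Finset.mem_univ v)

theorem maxDeg_le {m : ℕ} (h : ∀ v, deg X v ≤ m) : maxDeg X ≤ m :=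
  Finset.sup_le fun v _ => h v

theorem exists_deg_eq_maxDeg [Nonempty α] : ∃ v, deg X v = maxDeg X := by
  obtain ⟨v, -, hv⟩ := Finset.exists_mem_eq_sup Finset.univ Finset.univ_nonempty (deg X)
  exact ⟨v, hv.symm⟩

theorem maxDeg_pos_of_adj {u v : α} (h : X.Adj u v) : 0 < maxDeg X :=
  (deg_pos_of_adj X h).trans_le (deg_le_maxDeg X u)

theorem exists_adj_deg_eq_maxDeg {a b : α} (h : X.Adj a b) :
    ∃ u v, X.Adj u v ∧ deg X u = maxDeg X := by
  have : Nonempty α := ⟨a⟩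
  obtain ⟨u, hu⟩ := exists_deg_eq_maxDeg X
  obtain ⟨v, hv⟩ := (Set.ncard_pos).mp (hu ▸ maxDeg_pos_of_adj X h)
  exact ⟨u, v, hv, hu⟩

end MaxDeg

section MatchingBook

variable {α : Type*} (X : SimpleGraph α)

theorem deg_le_of_isMBE {k : ℕ} {f : α → ℕ} {page : Sym2 α → ℕ} (h : IsMBE X k f page)
    (v : α) : deg X v ≤ k := by
  obtain ⟨-, hpage, -, hmatching⟩ := h
  calc deg X v ≤ (Finset.range k : Set ℕ).ncard := by
        refine Set.ncard_le_ncard_of_injOn (fun x => page s(v, x))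
          (fun x hx => by simpa using hpage v x hx) fun x hx y hy hxy => ?_
        by_contra hne
        exact hmatching v x y hx hy hne hxy
    _ = k := by simp

theorem exists_isMBE [Finite α] : ∃ k f page, IsMBE X k f page := by
  obtain ⟨n, ⟨eV⟩⟩ := Finite.exists_equiv_fin α
  obtain ⟨k, ⟨eE⟩⟩ := Finite.exists_equiv_fin (Sym2 α)
  -- every edge gets a page of its own
  refine ⟨k, fun a => eV a, fun z => eE z, fun x y h => eV.injective (Fin.val_injective h),
    fun u v _ => (eE s(u, v)).isLt, ?_, ?_⟩
  · intro u v x y _ _ hpage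
    rcases Sym2.eq_iff.mp (eE.injective (Fin.val_injective hpage)) with ⟨rfl, rfl⟩ | ⟨rfl, rfl⟩
    all_goals omega
  · intro u v w _ _ hvw hpage
    exact hvw (Sym2.congr_right.mp (eE.injective (Fin.val_injective hpage)))

theorem maxDeg_le_mbt [Fintype α] : maxDeg X ≤ mbt X := by
  obtain ⟨f, page, h⟩ := Nat.sInf_mem (exists_isMBE X)
  exact maxDeg_le X (deg_le_of_isMBE X h)

end MatchingBook

section DerivedGraph

variable {V : Type*} (G : SimpleGraph V)

theorem deg_derivedG_inl (white : Bool) (u : V) :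
    deg (derivedG G false white) (Sum.inl u) = deg G u := by
  let edgeAt : G.neighborSet u → V ⊕ G.edgeSet := fun v => Sum.inr ⟨s(u, v), v.2⟩
  have hinj : Function.Injective edgeAt := fun v v' h =>
    Subtype.ext (Sym2.congr_right.mp (congrArg Subtype.val (Sum.inr_injective h)))
  have hrange : (derivedG G false white).neighborSet (Sum.inl u) = Set.range edgeAt := by
    ext (v | ⟨e, he⟩)
    · simp [edgeAt, derivedG]
    · change u ∈ e ↔ _
      constructor
      · intro hu
        obtain ⟨v, rfl⟩ := Sym2.mem_iff_exists.mp hu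
        exact ⟨⟨v, he⟩, rfl⟩
      · rintro ⟨v, hv⟩
        cases hv
        exact Sym2.mem_mk_left u v
  rw [deg, hrange, Set.ncard_range_of_injective hinj, Nat.card_coe_set_eq, deg]

theorem deg_add_one_le_deg_derivedG_inr [Finite V] (black : Bool) {a b : V} (hab : G.Adj a b) :
    deg G a + 1 ≤ deg (derivedG G black true) (Sum.inr ⟨s(a, b), hab⟩) := by
  classical
  -- `a` and `b` go to themselves, every other neighbour `c` of `a` to the edge `ac`
  let φ : V → V ⊕ G.edgeSet := fun c =>
    if h : G.Adj a c ∧ c ≠ b then Sum.inr ⟨s(a, c), h.1⟩ else Sum.inl c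
  have hmaps : ∀ c ∈ insert a (G.neighborSet a),
      φ c ∈ (derivedG G black true).neighborSet (Sum.inr ⟨s(a, b), hab⟩) := by
    intro c hc
    by_cases h : G.Adj a c ∧ c ≠ b
    · simp only [φ, dif_pos h]
      refine ⟨rfl, fun he => h.2 ?_, a, Sym2.mem_mk_left a b, Sym2.mem_mk_left a c⟩
      exact (Sym2.congr_right.mp (congrArg Subtype.val he)).symm
    · simp only [φ, dif_neg h]
      change c ∈ s(a, b)
      rcases hc with rfl | hc
      · exact Sym2.mem_mk_left c b
      · exact (not_not.mp fun hcb => h ⟨hc, hcb⟩) ▸ Sym2.mem_mk_right a b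
  have hinj : Set.InjOn φ (insert a (G.neighborSet a)) := by
    intro c _ c' _ hcc'
    by_cases h : G.Adj a c ∧ c ≠ b <;> by_cases h' : G.Adj a c' ∧ c' ≠ b
    · simp only [φ, dif_pos h, dif_pos h'] at hcc'
      exact Sym2.congr_right.mp (congrArg Subtype.val (Sum.inr_injective hcc'))
    · simp only [φ, dif_pos h, dif_neg h'] at hcc'
      exact absurd hcc' Sum.inr_ne_inl
    · simp only [φ, dif_neg h, dif_pos h'] at hcc'
      exact absurd hcc' Sum.inl_ne_inr
    · simp only [φ, dif_neg h, dif_neg h'] at hcc'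
      exact Sum.inl_injective hcc'
  calc deg G a + 1 = (insert a (G.neighborSet a)).ncard :=
        (Set.ncard_insert_of_notMem G.notMem_neighborSet_self).symm
    _ ≤ _ := Set.ncard_le_ncard_of_injOn φ hmaps hinj

theorem deg_Q_inl (u : V) : deg (FGraph .Q G) (Sum.inl u) = deg G u :=
  deg_derivedG_inl G true u

end DerivedGraph

section Sum

variable {V W : Type*} (F : FOp) (G : SimpleGraph V) (H : SimpleGraph W)

theorem neighborSet_FSum_inl (u : V) (w : W) :
    (FSum F G H).neighborSet (Sum.inl u, w) =
      (FGraph F G).neighborSet (Sum.inl u) ×ˢ {w} ∪ {Sum.inl u} ×ˢ H.neighborSet w := by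
  ext ⟨x, w'⟩
  simp only [mem_neighborSet, FSum, Set.mem_union, Set.mem_prod, Set.mem_singleton_iff]
  constructor
  · rintro (⟨rfl, -, hw⟩ | ⟨rfl, hx⟩)
    exacts [Or.inr ⟨rfl, hw⟩, Or.inl ⟨hx, rfl⟩]
  · rintro (⟨hx, rfl⟩ | ⟨rfl, hw⟩)
    exacts [Or.inr ⟨rfl, hx⟩, Or.inl ⟨rfl, ⟨u, rfl⟩, hw⟩]

theorem neighborSet_FSum_inr (e : G.edgeSet) (w : W) :
    (FSum F G H).neighborSet (Sum.inr e, w) = (FGraph F G).neighborSet (Sum.inr e) ×ˢ {w} := by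
  ext ⟨x, w'⟩
  simp only [mem_neighborSet, FSum, Set.mem_prod, Set.mem_singleton_iff]
  constructor
  · rintro (⟨-, ⟨u, hu⟩, -⟩ | ⟨rfl, hx⟩)
    exacts [absurd hu Sum.inr_ne_inl, ⟨hx, rfl⟩]
  · rintro ⟨hx, rfl⟩
    exact Or.inr ⟨rfl, hx⟩

theorem deg_FSum_inr (e : G.edgeSet) (w : W) :
    deg (FSum F G H) (Sum.inr e, w) = deg (FGraph F G) (Sum.inr e) := by
  simp [deg, neighborSet_FSum_inr]

variable [Finite V] [Finite W]

theorem deg_FSum_inl (u : V) (w : W) :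
    deg (FSum F G H) (Sum.inl u, w) = deg (FGraph F G) (Sum.inl u) + deg H w := by
  have hdisj : Disjoint ((FGraph F G).neighborSet (Sum.inl u) ×ˢ {w})
      ({Sum.inl u} ×ˢ H.neighborSet w) :=
    Set.disjoint_prod.mpr (Or.inr (Set.disjoint_singleton_left.mpr (H.notMem_neighborSet_self)))
  rw [deg, neighborSet_FSum_inl, Set.ncard_union_eq hdisj]
  simp [deg]

theorem deg_FGraph_le_deg_FSum (x : V ⊕ G.edgeSet) (w : W) :
    deg (FGraph F G) x ≤ deg (FSum F G H) (x, w) := by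
  calc deg (FGraph F G) x = ((FGraph F G).neighborSet x ×ˢ {w}).ncard := by simp [deg]
    _ ≤ deg (FSum F G H) (x, w) := Set.ncard_le_ncard fun ⟨y, w'⟩ ⟨hy, hw⟩ => Or.inr ⟨hw.symm, hy⟩

end Sum

section QSum

variable {V W : Type*} [Fintype V] [Fintype W] (G : SimpleGraph V)
  [DecidableRel G.Adj] (H : SimpleGraph W)

theorem maxDeg_lt_maxDeg_Q {a b : V} (hab : G.Adj a b) : maxDeg G < maxDeg (FGraph .Q G) := by
  obtain ⟨u, v, huv, hu⟩ := exists_adj_deg_eq_maxDeg G hab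
  calc maxDeg G < deg G u + 1 := by omega
    _ ≤ deg (FGraph .Q G) (Sum.inr ⟨s(u, v), huv⟩) := deg_add_one_le_deg_derivedG_inr G false huv
    _ ≤ maxDeg (FGraph .Q G) := deg_le_maxDeg _ _

theorem maxDeg_QSum_eq_max [Nonempty V] [Nonempty W] :
    maxDeg (FSum .Q G H) = max (maxDeg (FGraph .Q G)) (maxDeg G + maxDeg H) := by
  refine le_antisymm (maxDeg_le _ fun ⟨x, w⟩ => ?_) (max_le ?_ ?_)
  · rcases x with u | e
    · rw [deg_FSum_inl, deg_Q_inl]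
      exact le_max_of_le_right (add_le_add (deg_le_maxDeg G u) (deg_le_maxDeg H w))
    · rw [deg_FSum_inr]
      exact le_max_of_le_left (deg_le_maxDeg _ _)
  · obtain ⟨w⟩ := ‹Nonempty W›
    exact maxDeg_le _ fun x => (deg_FGraph_le_deg_FSum .Q G H x w).trans (deg_le_maxDeg _ _)
  · obtain ⟨u, hu⟩ := exists_deg_eq_maxDeg G
    obtain ⟨w, hw⟩ := exists_deg_eq_maxDeg H
    rw [← hu, ← hw, ← deg_Q_inl, ← deg_FSum_inl]
    exact deg_le_maxDeg _ _

end QSum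

theorem maxDeg_QSum_general {V W : Type*} [Fintype V] [Fintype W]
    (G : SimpleGraph V) [DecidableRel G.Adj] (H : SimpleGraph W)
    (hGE : G.edgeSet.Nonempty) (hHE : H.edgeSet.Nonempty) :
    maxDeg (FSum .Q G H) = max (maxDeg (FGraph .Q G)) (maxDeg G + maxDeg H) ∧
      maxDeg (FSum .Q G H) < mbt (FGraph .Q G) + maxDeg H := by
  obtain ⟨a, b, hab⟩ := ne_bot_iff_exists_adj.mp (edgeSet_nonempty.mp hGE)
  obtain ⟨c, d, hcd⟩ := ne_bot_iff_exists_adj.mp (edgeSet_nonempty.mp hHE)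
  have : Nonempty V := ⟨a⟩
  have : Nonempty W := ⟨c⟩
  have hsum := maxDeg_QSum_eq_max G H
  have hQ := maxDeg_le_mbt (FGraph .Q G)
  have hG := maxDeg_lt_maxDeg_Q G hab
  have hH := maxDeg_pos_of_adj H hcd
  refine ⟨hsum, ?_⟩
  rw [hsum, max_lt_iff]
  omega

/-- For a finite connected simple graph `G` with at least one edge and a
finite simple graph `H` with at least one edge,
`Δ(G +_Q H) = max {Δ(Q(G)), Δ(G) + Δ(H)}` and `Δ(G +_Q H) < mbt(Q(G)) + Δ(H)`. -/
theorem maxDeg_QSum {V W : Type*} [Fintype V] [DecidableEq V] [Fintype W]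
    (G : SimpleGraph V) [DecidableRel G.Adj] (H : SimpleGraph W)
    (hGconn : G.Connected) (hGE : G.edgeSet.Nonempty) (hHE : H.edgeSet.Nonempty) :
    maxDeg (FSum .Q G H) = max (maxDeg (FGraph .Q G)) (maxDeg G + maxDeg H) ∧
      maxDeg (FSum .Q G H) < mbt (FGraph .Q G) + maxDeg H :=
  maxDeg_QSum_general G H hGE hHE
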